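/- arXiv:2301.03310 — 4 statements merged into one kernel-verified Lean document; each statement's English description precedes it below -/
import Mathlib

section
/- If x̄ ∈ ℝⁿ is weakly Pareto optimal for a continuously differentiable F : ℝⁿ → ℝᵐ, then x̄ is Pareto stationary, i.e., for every d ∈ ℝⁿ there exists j such that ∇fⱼ(x̄)ᵀd ≥ 0. -/
open RealInnerProductSpace

/-- Weak Pareto optimality implies Pareto stationarity. -/
theorem weak_pareto_implies_pareto_stationary
    {n m : ℕ}
    (f : Fin m → EuclideanSpace ℝ (Fin n) → ℝ)
    (hf : ∀ j, ContDiff ℝ 1 (f j))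
    (xbar : EuclideanSpace ℝ (Fin n))
    (g : Fin m → EuclideanSpace ℝ (Fin n))
    (hg : ∀ j, HasGradientAt (f j) (g j) xbar)
    (hweak : ¬ ∃ y : EuclideanSpace ℝ (Fin n), ∀ j, f j y < f j xbar) :
    ∀ d : EuclideanSpace ℝ (Fin n), ∃ j, 0 ≤ ⟪g j, d⟫ := by
  intro d
  by_contra h
  push_neg at h
  have key : ∀ j, ∀ᶠ t in nhdsWithin (0:ℝ) (Set.Ioi 0),
      f j (xbar + t • d) < f j xbar := by
    intro j
    have hline : HasDerivAt (fun t : ℝ => xbar + t • d) d 0 := by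
      simpa using ((hasDerivAt_id (0:ℝ)).smul_const d).const_add xbar
    have hF : HasFDerivAt (f j) (InnerProductSpace.toDual ℝ _ (g j)) xbar :=
      (hg j).hasFDerivAt
    have hF' : HasFDerivAt (f j) (InnerProductSpace.toDual ℝ _ (g j))
        ((fun t : ℝ => xbar + t • d) 0) := by simpa using hF
    have hφ : HasDerivAt (fun t : ℝ => f j (xbar + t • d)) ⟪g j, d⟫ 0 := by
      have := hF'.comp_hasDerivAt (0:ℝ) hline
      simpa [InnerProductSpace.toDual_apply_apply, Function.comp_def] using this
    rw [hasDerivAt_iff_tendsto_slope] at hφ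
    have hev : ∀ᶠ t in nhdsWithin (0:ℝ) {0}ᶜ,
        slope (fun t : ℝ => f j (xbar + t • d)) 0 t < 0 :=
      hφ.eventually (eventually_lt_nhds (h j))
    have hmono : nhdsWithin (0:ℝ) (Set.Ioi 0) ≤ nhdsWithin (0:ℝ) {0}ᶜ :=
      nhdsWithin_mono _ (fun x hx => ne_of_gt hx)
    filter_upwards [hmono hev, self_mem_nhdsWithin] with t hts (htpos : 0 < t)
    have hsl : (f j (xbar + t • d) - f j (xbar + (0:ℝ) • d)) / (t - 0) < 0 := by
      simpa [slope_def_field, div_eq_inv_mul] using hts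
    have : f j (xbar + t • d) - f j (xbar + (0:ℝ) • d) < 0 := by
      by_contra hcon
      push_neg at hcon
      exact absurd (div_nonneg hcon (by linarith)) (not_le.2 hsl)
    simpa using this
  have hall : ∀ᶠ t in nhdsWithin (0:ℝ) (Set.Ioi 0),
      ∀ j, f j (xbar + t • d) < f j xbar := Filter.eventually_all.2 key
  obtain ⟨t, ht⟩ := hall.exists
  exact hweak ⟨xbar + t • d, ht⟩
end

section
/- Let x ∈ ℝⁿ, I ⊆ {1,...,m} nonempty, with θᴵ(x) < 0, and let γ ∈ (0,1). Then there exists ᾱ > 0 such that for all α ∈ (0, ᾱ], fⱼ(x + α vᴵ(x)) ≤ fⱼ(x) + γ α θᴵ(x) for all j ∈ I (the Armijo-type sufficient decrease condition holds for small enough steps). -/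
open Filter Topology RealInnerProductSpace

/-!
For `j ∈ I` the directional derivative `⟪∇fⱼ(x), v⟫` is at most `θ`, and `θ < γθ` because `θ < 0`
and `γ < 1`. A strict gap between a derivative and a slope gives the slope inequality for all
small positive steps, and finitely many such eventual statements hold simultaneously.
-/

theorem HasDerivAt.eventually_le_add_mul_of_lt {φ : ℝ → ℝ} {d c a : ℝ} (h : HasDerivAt φ d a)
    (hdc : d < c) : ∀ᶠ t in 𝓝[>] 0, φ (a + t) ≤ φ a + c * t := by
  filter_upwards [h.tendsto_slope_zero_right.eventually_lt_const hdc, self_mem_nhdsWithin]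
    with t hslope (ht : 0 < t)
  rw [smul_eq_mul, inv_mul_lt_iff₀ ht] at hslope
  linarith

theorem HasLineDerivAt.eventually_le_add_mul_of_lt {E : Type*} [AddCommGroup E] [Module ℝ E]
    [TopologicalSpace E] {f : E → ℝ} {x v : E} {d c : ℝ} (h : HasLineDerivAt ℝ f d x v)
    (hdc : d < c) : ∀ᶠ t in 𝓝[>] 0, f (x + t • v) ≤ f x + c * t := by
  simpa using HasDerivAt.eventually_le_add_mul_of_lt h hdc

theorem armijo_sufficient_decrease_general
    {n m : ℕ}
    (f : Fin m → EuclideanSpace ℝ (Fin n) → ℝ)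
    (x : EuclideanSpace ℝ (Fin n))
    (g : Fin m → EuclideanSpace ℝ (Fin n))
    (hg : ∀ j, HasGradientAt (f j) (g j) x)
    (I : Finset (Fin m)) (hI : I.Nonempty)
    (v : EuclideanSpace ℝ (Fin n)) (θ : ℝ)
    (hθ : θ = I.sup' hI (fun j => ⟪g j, v⟫) + (1 / 2) * ‖v‖ ^ 2)
    (hneg : θ < 0)
    (γ : ℝ) (hγ : γ ∈ Set.Ioo (0 : ℝ) 1) :
    ∃ αbar > (0 : ℝ), ∀ α ∈ Set.Ioc (0 : ℝ) αbar, ∀ j ∈ I,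
      f j (x + α • v) ≤ f j x + γ * α * θ := by
  have hslope : ∀ j ∈ I, ⟪g j, v⟫ < γ * θ := fun j hj => by
    have := I.le_sup' (fun j => ⟪g j, v⟫) hj
    nlinarith [hγ.2, sq_nonneg ‖v‖]
  have hev : ∀ᶠ α in 𝓝[>] 0, ∀ j ∈ I, f j (x + α • v) ≤ f j x + γ * α * θ := by
    refine (eventually_all_finset I).2 fun j hj => ?_
    have hline := (hg j).hasFDerivAt.hasLineDerivAt v
    filter_upwards [hline.eventually_le_add_mul_of_lt (by simpa using hslope j hj)] with α hα
    linarith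
  obtain ⟨αbar, hαbar, hsub⟩ := mem_nhdsGT_iff_exists_Ioc_subset.1 hev
  exact ⟨αbar, hαbar, fun α hα => hsub hα⟩

/-- Armijo-type sufficient decrease holds for all small enough steps along vᴵ(x)
when θᴵ(x) < 0 (Fliege–Svaiter Lemma 4). -/
theorem armijo_sufficient_decrease
    {n m : ℕ}
    (f : Fin m → EuclideanSpace ℝ (Fin n) → ℝ)
    (hf : ∀ j, ContDiff ℝ 1 (f j))
    (x : EuclideanSpace ℝ (Fin n))
    (g : Fin m → EuclideanSpace ℝ (Fin n))
    (hg : ∀ j, HasGradientAt (f j) (g j) x)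
    (I : Finset (Fin m)) (hI : I.Nonempty)
    (v : EuclideanSpace ℝ (Fin n)) (θ : ℝ)
    (hθ : θ = I.sup' hI (fun j => ⟪g j, v⟫) + (1 / 2) * ‖v‖ ^ 2)
    (hmin : ∀ d : EuclideanSpace ℝ (Fin n),
      θ ≤ I.sup' hI (fun j => ⟪g j, d⟫) + (1 / 2) * ‖d‖ ^ 2)
    (hneg : θ < 0)
    (γ : ℝ) (hγ : γ ∈ Set.Ioo (0 : ℝ) 1) :
    ∃ αbar > (0 : ℝ), ∀ α ∈ Set.Ioc (0 : ℝ) αbar, ∀ j ∈ I,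
      f j (x + α • v) ≤ f j x + γ * α * θ :=
  armijo_sufficient_decrease_general f x g hg I hI v θ hθ hneg γ hγ
end

section
/- Let X̂ be a finite set of points in ℝⁿ, z ∈ ℝⁿ a point nondominated with respect to every y ∈ X̂ (for each y ∈ X̂, ¬(F(y) ⪇ F(z))), and suppose θᴵ(z) < 0 for some nonempty I ⊆ {1,...,m}. Then for δ ∈ (0,1), α₀ > 0, there exists h ∈ ℕ such that for every y ∈ X̂ there exists an index j ∈ {1,...,m} with fⱼ(z + α₀δʰ vᴵ(z)) < fⱼ(y). -/
/-!
Along the ray `t ↦ z + t • v` every objective `fⱼ` with `j ∈ I` has slope `⟪∇fⱼ(z), v⟫ ≤ θ < 0`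
at `t = 0`, so it strictly decreases for small `t > 0`. Fix an archive point `y` that does not
dominate `z`. If `fⱼ(z) < fⱼ(y)` for some `j`, continuity keeps this for small `t`; otherwise
`F(y) ≤ F(z)`, hence `F(y) = F(z)`, and the decrease of any `fⱼ`, `j ∈ I`, beats `y`. The archive
is finite, so one small `t` works for all `y`, and the steps `α₀ δʰ` eventually reach it.
-/

open Filter Topology RealInnerProductSpace

theorem HasDerivAt.eventually_nhdsGT_lt {φ : ℝ → ℝ} {c x : ℝ} (h : HasDerivAt φ c x)
    (hc : c < 0) : ∀ᶠ t in 𝓝[>] x, φ t < φ x := by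
  have hslope : ∀ᶠ t in 𝓝[>] x, slope φ x t < 0 :=
    ((hasDerivAt_iff_tendsto_slope.mp h).mono_left (nhdsGT_le_nhdsNE x)).eventually_lt_const hc
  filter_upwards [hslope, self_mem_nhdsWithin] with t hneg (hxt : x < t)
  exact (slope_neg_iff_of_le hxt.le).mp hneg

theorem HasGradientAt.hasDerivAt_comp_add_smul {E : Type*} [NormedAddCommGroup E]
    [InnerProductSpace ℝ E] [CompleteSpace E] {f : E → ℝ} {g z : E} (hf : HasGradientAt f g z)
    (v : E) : HasDerivAt (fun t : ℝ => f (z + t • v)) ⟪g, v⟫ 0 := by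
  have hray : HasDerivAt (fun t : ℝ => z + t • v) v 0 := by
    simpa using ((hasDerivAt_id (0 : ℝ)).smul_const v).const_add z
  have hf' : HasFDerivAt f (InnerProductSpace.toDual ℝ E g) (z + (0 : ℝ) • v) := by
    simpa using hf.hasFDerivAt
  have hcomp := hf'.comp_hasDerivAt 0 hray
  simp only [Function.comp_def, InnerProductSpace.toDual_apply_apply] at hcomp
  exact hcomp

theorem eventually_exists_lt_of_not_dominates {ι α : Type*} {l : Filter α} {φ : ι → α → ℝ}
    {a b : ι → ℝ} (hφ : ∀ j, Tendsto (φ j) l (𝓝 (a j)))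
    (hdesc : ∃ j, ∀ᶠ t in l, φ j t < a j) (hnd : ¬((∀ j, b j ≤ a j) ∧ b ≠ a)) :
    ∀ᶠ t in l, ∃ j, φ j t < b j := by
  by_cases hbetter : ∃ j, a j < b j
  · obtain ⟨j, hj⟩ := hbetter
    exact ((hφ j).eventually_lt_const hj).mono fun t ht => ⟨j, ht⟩
  · push Not at hbetter
    have hba : b = a := by
      by_contra hne
      exact hnd ⟨hbetter, hne⟩
    obtain ⟨j, hj⟩ := hdesc
    exact hj.mono fun t ht => ⟨j, hba ▸ ht⟩

theorem ifsd_partial_line_search_well_defined_general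
    {n m : ℕ}
    (f : Fin m → EuclideanSpace ℝ (Fin n) → ℝ)
    (Xhat : Finset (EuclideanSpace ℝ (Fin n)))
    (z : EuclideanSpace ℝ (Fin n))
    (hnondom : ∀ y ∈ Xhat,
      ¬ ((∀ j, f j y ≤ f j z) ∧ (fun j => f j y) ≠ (fun j => f j z)))
    (g : Fin m → EuclideanSpace ℝ (Fin n))
    (hg : ∀ j, HasGradientAt (f j) (g j) z)
    (I : Finset (Fin m)) (hI : I.Nonempty)
    (v : EuclideanSpace ℝ (Fin n)) (θ : ℝ)
    (hθ : θ = I.sup' hI (fun j => ⟪g j, v⟫) + (1 / 2) * ‖v‖ ^ 2)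
    (hneg : θ < 0)
    (δ α₀ : ℝ) (hδ : δ ∈ Set.Ioo (0 : ℝ) 1) (hα₀ : 0 < α₀) :
    ∃ h : ℕ, ∀ y ∈ Xhat, ∃ j : Fin m,
      f j (z + (α₀ * δ ^ h) • v) < f j y := by
  have hderiv j := (hg j).hasDerivAt_comp_add_smul v
  have hlim j : Tendsto (fun t : ℝ => f j (z + t • v)) (𝓝[>] 0) (𝓝 (f j z)) := by
    simpa using (hderiv j).continuousAt.tendsto.mono_left nhdsWithin_le_nhds
  have hdesc : ∃ j, ∀ᶠ t in 𝓝[>] (0 : ℝ), f j (z + t • v) < f j z := by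
    obtain ⟨j, hj⟩ := hI
    have hslope : ⟪g j, v⟫ < 0 := by
      have := I.le_sup' (fun j => ⟪g j, v⟫) hj
      nlinarith [sq_nonneg ‖v‖]
    exact ⟨j, by simpa using (hderiv j).eventually_nhdsGT_lt hslope⟩
  have hsmall : ∀ᶠ t in 𝓝[>] (0 : ℝ), ∀ y ∈ Xhat, ∃ j, f j (z + t • v) < f j y :=
    (eventually_all_finset Xhat).mpr fun y hy =>
      eventually_exists_lt_of_not_dominates hlim hdesc (hnondom y hy)
  have hsteps : Tendsto (fun h : ℕ => α₀ * δ ^ h) atTop (𝓝[>] 0) := by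
    simpa using TendstoNhdsWithinIoi.const_mul hα₀ (tendsto_pow_atTop_nhdsWithin_zero_of_lt_one hδ.1 hδ.2)
  exact (hsteps.eventually hsmall).exists

/-- Well-definedness of the IFSD partial-descent line search (Proposition 2):
if z is nondominated w.r.t. the finite archive X̂ and θᴵ(z) < 0, then some trial
step α₀δʰ produces a point that strictly improves some objective against every
point of the archive. -/
theorem ifsd_partial_line_search_well_defined
    {n m : ℕ}
    (f : Fin m → EuclideanSpace ℝ (Fin n) → ℝ)
    (hf : ∀ j, ContDiff ℝ 1 (f j))
    (Xhat : Finset (EuclideanSpace ℝ (Fin n)))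
    (z : EuclideanSpace ℝ (Fin n))
    (hnondom : ∀ y ∈ Xhat,
      ¬ ((∀ j, f j y ≤ f j z) ∧ (fun j => f j y) ≠ (fun j => f j z)))
    (g : Fin m → EuclideanSpace ℝ (Fin n))
    (hg : ∀ j, HasGradientAt (f j) (g j) z)
    (I : Finset (Fin m)) (hI : I.Nonempty)
    (v : EuclideanSpace ℝ (Fin n)) (θ : ℝ)
    (hθ : θ = I.sup' hI (fun j => ⟪g j, v⟫) + (1 / 2) * ‖v‖ ^ 2)
    (hmin : ∀ d : EuclideanSpace ℝ (Fin n),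
      θ ≤ I.sup' hI (fun j => ⟪g j, d⟫) + (1 / 2) * ‖d‖ ^ 2)
    (hneg : θ < 0)
    (δ α₀ : ℝ) (hδ : δ ∈ Set.Ioo (0 : ℝ) 1) (hα₀ : 0 < α₀) :
    ∃ h : ℕ, ∀ y ∈ Xhat, ∃ j : Fin m,
      f j (z + (α₀ * δ ^ h) • v) < f j y :=
  ifsd_partial_line_search_well_defined_general f Xhat z hnondom g hg I hI v θ hθ hneg δ α₀ hδ hα₀
end

section
/- If for a point x̄ with θ(x̄) < 0 and γ ∈ (0,1) it holds that for every q ∈ ℕ there exists an index h̃ ∈ {1,...,m} with f_{h̃}(x̄ + α₀δ^q v(x̄)) ≥ f_{h̃}(x̄) + γ α₀ δ^q θ(x̄), then a contradiction arises; hence θ(x̄) ≥ 0, i.e., x̄ is Pareto stationary. -/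
open RealInnerProductSpace Filter Topology

/- Along the steepest common descent direction v every component f_j has directional
derivative ⟪g j, v⟫ ≤ θ < γ θ, so for all small enough steps α the Armijo condition
f_j(x̄ + α v) < f_j(x̄) + γ α θ holds for every j at once. The trial steps α₀ δ^q tend to 0
from the right, so one of them satisfies it, contradicting the assumed failure. -/

theorem HasFDerivAt.eventually_lt_add_smul {E : Type*} [NormedAddCommGroup E]
    [NormedSpace ℝ E] {f : E → ℝ} {f' : E →L[ℝ] ℝ} {x v : E} {c : ℝ}
    (hf : HasFDerivAt f f' x) (hc : f' v < c) :
    ∀ᶠ t in 𝓝[>] 0, f (x + t • v) < f x + t * c := by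
  have hline : HasDerivAt (fun t : ℝ => f (x + t • v)) (f' v) 0 := by
    have hpath : HasDerivAt (fun t : ℝ => x + t • v) v 0 :=
      ((hasDerivAt_id (0 : ℝ)).smul_const v).const_add x |>.congr_deriv (one_smul ℝ v)
    exact (by simpa using hf : HasFDerivAt f f' (x + (0 : ℝ) • v)).comp_hasDerivAt 0 hpath
  have hslope := hline.hasDerivWithinAt.limsup_slope_le' (s := Set.Ioi 0) (lt_irrefl (0 : ℝ)) hc
  filter_upwards [hslope, self_mem_nhdsWithin] with t ht (htpos : 0 < t)
  rw [slope_def_field, zero_smul, add_zero, sub_zero, div_lt_iff₀ htpos] at ht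
  linarith

theorem HasGradientAt.eventually_lt_add_smul {E : Type*} [NormedAddCommGroup E]
    [InnerProductSpace ℝ E] [CompleteSpace E] {f : E → ℝ} {g x v : E} {c : ℝ}
    (hf : HasGradientAt f g x) (hc : ⟪g, v⟫ < c) :
    ∀ᶠ t in 𝓝[>] 0, f (x + t • v) < f x + t * c :=
  hf.hasFDerivAt.eventually_lt_add_smul (by simpa using hc)

theorem tendsto_const_mul_pow_nhdsGT_zero {a r : ℝ} (ha : 0 < a) (hr₀ : 0 < r) (hr₁ : r < 1) :
    Tendsto (fun n : ℕ => a * r ^ n) atTop (𝓝[>] 0) :=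
  tendsto_nhdsWithin_of_tendsto_nhds_of_eventually_within _
    (by simpa using (tendsto_pow_atTop_nhds_zero_of_lt_one hr₀.le hr₁).const_mul a)
    (Eventually.of_forall fun n => mul_pos ha (pow_pos hr₀ n))

theorem no_persistent_armijo_failure_general
    {n m : ℕ} (hm : 0 < m)
    (f : Fin m → EuclideanSpace ℝ (Fin n) → ℝ)
    (xbar : EuclideanSpace ℝ (Fin n))
    (g : Fin m → EuclideanSpace ℝ (Fin n))
    (hg : ∀ j, HasGradientAt (f j) (g j) xbar)
    (v : EuclideanSpace ℝ (Fin n)) (θ : ℝ)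
    (hθ : θ = (Finset.univ.sup' (Finset.univ_nonempty_iff.mpr ⟨⟨0, hm⟩⟩)
        (fun j => ⟪g j, v⟫)) + (1 / 2) * ‖v‖ ^ 2)
    (hneg : θ < 0)
    (γ δ α₀ : ℝ) (hγ : γ ∈ Set.Ioo (0 : ℝ) 1) (hδ : δ ∈ Set.Ioo (0 : ℝ) 1)
    (hα₀ : 0 < α₀)
    (hfail : ∀ q : ℕ, ∃ j : Fin m,
      f j (xbar + (α₀ * δ ^ q) • v) ≥ f j xbar + γ * (α₀ * δ ^ q) * θ) :
    False := by
  have hdescent : ∀ j, ⟪g j, v⟫ < γ * θ := by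
    intro j
    have hle := Finset.le_sup' (fun j => ⟪g j, v⟫) (Finset.mem_univ j)
    nlinarith [hγ.2, sq_nonneg ‖v‖]
  have harmijo : ∀ᶠ t in 𝓝[>] 0, ∀ j, f j (xbar + t • v) < f j xbar + t * (γ * θ) :=
    eventually_all.2 fun j => (hg j).eventually_lt_add_smul (hdescent j)
  obtain ⟨q, hq⟩ := ((tendsto_const_mul_pow_nhdsGT_zero hα₀ hδ.1 hδ.2).eventually harmijo).exists
  obtain ⟨j, hj⟩ := hfail q
  linarith [hq j]

/-- Final contradiction in the IFSD convergence proof: if θ(x̄) < 0 then the Armijo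
condition cannot fail (in some component) for every trial step α₀δ^q. -/
theorem no_persistent_armijo_failure
    {n m : ℕ} (hm : 0 < m)
    (f : Fin m → EuclideanSpace ℝ (Fin n) → ℝ)
    (hf : ∀ j, ContDiff ℝ 1 (f j))
    (xbar : EuclideanSpace ℝ (Fin n))
    (g : Fin m → EuclideanSpace ℝ (Fin n))
    (hg : ∀ j, HasGradientAt (f j) (g j) xbar)
    (v : EuclideanSpace ℝ (Fin n)) (θ : ℝ)
    (hθ : θ = (Finset.univ.sup' (Finset.univ_nonempty_iff.mpr ⟨⟨0, hm⟩⟩)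
        (fun j => ⟪g j, v⟫)) + (1 / 2) * ‖v‖ ^ 2)
    (hmin : ∀ d : EuclideanSpace ℝ (Fin n),
      θ ≤ (Finset.univ.sup' (Finset.univ_nonempty_iff.mpr ⟨⟨0, hm⟩⟩)
        (fun j => ⟪g j, d⟫)) + (1 / 2) * ‖d‖ ^ 2)
    (hneg : θ < 0)
    (γ δ α₀ : ℝ) (hγ : γ ∈ Set.Ioo (0 : ℝ) 1) (hδ : δ ∈ Set.Ioo (0 : ℝ) 1)
    (hα₀ : 0 < α₀)
    (hfail : ∀ q : ℕ, ∃ j : Fin m,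
      f j (xbar + (α₀ * δ ^ q) • v) ≥ f j xbar + γ * (α₀ * δ ^ q) * θ) :
    False :=
  no_persistent_armijo_failure_general hm f xbar g hg v θ hθ hneg γ δ α₀ hγ hδ hα₀ hfail
end
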